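/- Let $K$ be a field, $H(X,Y) \in K[[X,Y]]$ regular in $Y$ of order $\lambda$ (i.e. $\mathrm{ord}(H(0,Y)) = \lambda$), let $a(X,Y) \in K[[X,Y]]$, and let $m \geq 1$. Suppose there exist a unit $u$ and $G \in K[[Y_1]]$ with $\mathrm{ord}(G) = \lambda$ such that $H(X_1, X_1Y_1) = X_1^\lambda u (X_1 + G(Y_1))$, and suppose $(X_1 + G(Y_1))^m$ divides $a(X_1, X_1 Y_1)/X_1^c$ in $K[[X_1,Y_1]]$ for some $c$ with $X_1^c \mid a(X_1, X_1Y_1)$. Then $H(X,Y)^m$ divides $a(X,Y)$ in $K[[X,Y]]$. -/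

import Mathlib

/-- The monomial `X^i Y^j` exponent in `K[[X,Y]] = MvPowerSeries (Fin 2) K`. -/
noncomputable def mon2 (i j : ℕ) : Fin 2 →₀ ℕ :=
  Finsupp.single 0 i + Finsupp.single 1 j

/-- `substXY a` is the series `a(X, XY)`, the result of the quadratic substitution
`X ↦ X₁`, `Y ↦ X₁Y₁`. -/
noncomputable def substXY {K : Type*} [Field K] (a : MvPowerSeries (Fin 2) K) :
    MvPowerSeries (Fin 2) K :=
  fun m => if m 1 ≤ m 0 then MvPowerSeries.coeff (mon2 (m 0 - m 1) (m 1)) a else 0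

open Finset

@[simp] lemma mon2_apply0 (i j : ℕ) : mon2 i j 0 = i := by simp [mon2]
@[simp] lemma mon2_apply1 (i j : ℕ) : mon2 i j 1 = j := by simp [mon2]

lemma mon2_eta (mm : Fin 2 →₀ ℕ) : mon2 (mm 0) (mm 1) = mm := by
  ext x; fin_cases x <;> simp

lemma mon2_zero_iff (i j : ℕ) : mon2 i j = 0 ↔ i = 0 ∧ j = 0 := by
  constructor
  · intro h
    have h0 := congrArg (fun f => f 0) h
    have h1 := congrArg (fun f => f 1) h
    simp at h0 h1; exact ⟨h0, h1⟩
  · rintro ⟨rfl, rfl⟩; ext x; fin_cases x <;> simp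

lemma mon2_add (i j u v : ℕ) : mon2 i j + mon2 u v = mon2 (i+u) (j+v) := by
  ext x; fin_cases x <;> simp

lemma mon2_eq_single0 (p : ℕ) : mon2 p 0 = Finsupp.single 0 p := by
  simp [mon2]

section Main

variable {K : Type*} [Field K]

lemma coeff_mul_mon2 (f g : MvPowerSeries (Fin 2) K) (i j : ℕ) :
    MvPowerSeries.coeff (mon2 i j) (f * g) =
      ∑ u ∈ range (i+1), ∑ x ∈ range (j+1),
        MvPowerSeries.coeff (mon2 u x) f * MvPowerSeries.coeff (mon2 (i-u) (j-x)) g := by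
  classical
  rw [MvPowerSeries.coeff_mul, ← Finset.sum_product']
  refine Finset.sum_nbij' (fun p => (p.1 0, p.1 1))
    (fun p => (mon2 p.1 p.2, mon2 (i - p.1) (j - p.2))) ?_ ?_ ?_ ?_ ?_
  · rintro ⟨p, q⟩ hp
    rw [Finset.HasAntidiagonal.mem_antidiagonal] at hp
    have h0 : p 0 + q 0 = i := by
      have := congrArg (fun f => f 0) hp; simpa [Finsupp.add_apply] using this
    have h1 : p 1 + q 1 = j := by
      have := congrArg (fun f => f 1) hp; simpa [Finsupp.add_apply] using this
    simp only [Finset.mem_product, Finset.mem_range]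
    omega
  · rintro ⟨u, x⟩ hu
    simp only [Finset.mem_product, Finset.mem_range] at hu
    rw [Finset.HasAntidiagonal.mem_antidiagonal]
    ext t; fin_cases t <;> simp <;> omega
  · rintro ⟨p, q⟩ hp
    rw [Finset.HasAntidiagonal.mem_antidiagonal] at hp
    have h0 : p 0 + q 0 = i := by
      have := congrArg (fun f => f 0) hp; simpa [Finsupp.add_apply] using this
    have h1 : p 1 + q 1 = j := by
      have := congrArg (fun f => f 1) hp; simpa [Finsupp.add_apply] using this
    simp only [Prod.mk.injEq]
    constructor
    · exact mon2_eta p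
    · rw [show i - p 0 = q 0 by omega, show j - p 1 = q 1 by omega]; exact mon2_eta q
  · rintro ⟨u, x⟩ hu
    simp
  · rintro ⟨p, q⟩ hp
    rw [Finset.HasAntidiagonal.mem_antidiagonal] at hp
    have h0 : p 0 + q 0 = i := by
      have := congrArg (fun f => f 0) hp; simpa [Finsupp.add_apply] using this
    have h1 : p 1 + q 1 = j := by
      have := congrArg (fun f => f 1) hp; simpa [Finsupp.add_apply] using this
    simp only []
    rw [mon2_eta p, show i - p 0 = q 0 by omega, show j - p 1 = q 1 by omega, mon2_eta q]

lemma coeff_substXY (a : MvPowerSeries (Fin 2) K) (i j : ℕ) :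
    MvPowerSeries.coeff (mon2 i j) (substXY a) =
      if j ≤ i then MvPowerSeries.coeff (mon2 (i-j) j) a else 0 := by
  show (if (mon2 i j) 1 ≤ (mon2 i j) 0 then _ else 0) = _
  simp

lemma substXY_mul (a b : MvPowerSeries (Fin 2) K) :
    substXY (a * b) = substXY a * substXY b := by
  apply MvPowerSeries.ext
  intro mm
  rw [← mon2_eta mm]
  generalize mm 0 = i
  generalize mm 1 = j
  rw [coeff_substXY, coeff_mul_mon2 (substXY a) (substXY b) i j]
  have hterm : ∀ u, u ∈ range (i+1) → ∀ x, x ∈ range (j+1) →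
      MvPowerSeries.coeff (mon2 u x) (substXY a) *
        MvPowerSeries.coeff (mon2 (i-u) (j-x)) (substXY b) =
      if x ≤ u ∧ j - x ≤ i - u then
        MvPowerSeries.coeff (mon2 (u-x) x) a *
          MvPowerSeries.coeff (mon2 (i-u-(j-x)) (j-x)) b else 0 := by
    intro u _ x _
    rw [coeff_substXY, coeff_substXY]
    by_cases h1 : x ≤ u <;> by_cases h2 : j - x ≤ i - u <;> simp [h1, h2]
  rw [Finset.sum_congr rfl (fun u hu => Finset.sum_congr rfl (fun x hx => hterm u hu x hx))]
  by_cases hji : j ≤ i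
  · rw [if_pos hji, coeff_mul_mon2 a b (i-j) j, Finset.sum_comm]
    conv_rhs => rw [Finset.sum_comm]
    refine Finset.sum_congr rfl (fun x hx => ?_)
    rw [Finset.mem_range] at hx
    have hx' : x ≤ j := by omega
    rw [← Finset.sum_filter]
    have hset : (range (i+1)).filter (fun u => x ≤ u ∧ j - x ≤ i - u) =
        Finset.Ico x (x + (i-j) + 1) := by
      ext u
      simp only [Finset.mem_filter, Finset.mem_range, Finset.mem_Ico]
      omega
    rw [hset, Finset.sum_Ico_eq_sum_range]
    have hlen : x + (i-j) + 1 - x = (i-j) + 1 := by omega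
    rw [hlen]
    refine Finset.sum_congr rfl (fun u' hu' => ?_)
    rw [Finset.mem_range] at hu'
    have e1 : x + u' - x = u' := by omega
    have e2 : i - (x + u') - (j - x) = i - j - u' := by omega
    rw [e1, e2]
  · rw [if_neg hji]
    symm
    apply Finset.sum_eq_zero
    intro u hu
    apply Finset.sum_eq_zero
    intro x hx
    rw [Finset.mem_range] at hu hx
    rw [if_neg (by omega : ¬ (x ≤ u ∧ j - x ≤ i - u))]

lemma substXY_one : substXY (1 : MvPowerSeries (Fin 2) K) = 1 := by
  apply MvPowerSeries.ext
  intro mm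
  rw [← mon2_eta mm]
  generalize mm 0 = i
  generalize mm 1 = j
  classical
  rw [coeff_substXY, MvPowerSeries.coeff_one, MvPowerSeries.coeff_one]
  by_cases hji : j ≤ i
  · rw [if_pos hji]
    simp only [mon2_zero_iff]
    split_ifs with h1 h2 <;> first | rfl | (exfalso; omega)
  · rw [if_neg hji]
    simp only [mon2_zero_iff]
    rw [if_neg (by omega)]

lemma substXY_add (a b : MvPowerSeries (Fin 2) K) :
    substXY (a + b) = substXY a + substXY b := by
  apply MvPowerSeries.ext
  intro mm
  rw [← mon2_eta mm]
  generalize mm 0 = i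
  generalize mm 1 = j
  rw [map_add, coeff_substXY, coeff_substXY, coeff_substXY, map_add]
  split <;> simp

lemma substXY_zero : substXY (0 : MvPowerSeries (Fin 2) K) = 0 := by
  apply MvPowerSeries.ext
  intro mm
  rw [← mon2_eta mm, coeff_substXY]
  simp

/-- `substXY` as a ring homomorphism. -/
noncomputable def substHom : MvPowerSeries (Fin 2) K →+* MvPowerSeries (Fin 2) K where
  toFun := substXY
  map_one' := substXY_one
  map_mul' := substXY_mul
  map_zero' := substXY_zero
  map_add' := substXY_add

/-- Restriction to `X = 0`, as a ring map to `K[[Y]]`. -/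
noncomputable def piY : MvPowerSeries (Fin 2) K →+* PowerSeries K where
  toFun a := PowerSeries.mk fun n => MvPowerSeries.coeff (mon2 0 n) a
  map_one' := by
    apply PowerSeries.ext
    intro n
    classical
    rw [PowerSeries.coeff_mk, MvPowerSeries.coeff_one, PowerSeries.coeff_one]
    by_cases h : n = 0
    · rw [if_pos (by rw [mon2_zero_iff]; omega), if_pos h]
    · rw [if_neg (by rw [mon2_zero_iff]; omega), if_neg h]
  map_mul' a b := by
    apply PowerSeries.ext
    intro n
    rw [PowerSeries.coeff_mk, coeff_mul_mon2, PowerSeries.coeff_mul]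
    rw [Finset.Nat.sum_antidiagonal_eq_sum_range_succ_mk]
    rw [Finset.sum_range_one]
    simp only [PowerSeries.coeff_mk, Nat.zero_sub]
  map_zero' := by
    apply PowerSeries.ext
    intro n
    simp
  map_add' a b := by
    apply PowerSeries.ext
    intro n
    simp

lemma coeff_piY (a : MvPowerSeries (Fin 2) K) (n : ℕ) :
    PowerSeries.coeff n (piY a) = MvPowerSeries.coeff (mon2 0 n) a := by
  show PowerSeries.coeff n (PowerSeries.mk fun n => MvPowerSeries.coeff (mon2 0 n) a) = _
  rw [PowerSeries.coeff_mk]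

/-- Weierstrass-division quotient coefficients, defined by lexicographic recursion. -/
noncomputable def Qw (F a : MvPowerSeries (Fin 2) K) (s : ℕ) : ℕ → ℕ → K := fun i j =>
  (MvPowerSeries.coeff (mon2 0 s) F)⁻¹ *
    (MvPowerSeries.coeff (mon2 i (j+s)) a -
      ∑ p ∈ (((range (i+1)) ×ˢ (range (j+s+1))).filter
          (fun p => p.1 < i ∨ (p.1 = i ∧ p.2 < j))).attach,
        Qw F a s p.1.1 p.1.2 *
          MvPowerSeries.coeff (mon2 (i - p.1.1) (j + s - p.1.2)) F)
termination_by i j => (i, j)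
decreasing_by
  · have hp := p.2
    simp only [Finset.mem_filter] at hp
    rcases hp.2 with h | h
    · exact Prod.Lex.left _ _ h
    · rw [h.1]; exact Prod.Lex.right _ h.2

/-- The Weierstrass-division quotient series. -/
noncomputable def qw (F a : MvPowerSeries (Fin 2) K) (s : ℕ) : MvPowerSeries (Fin 2) K :=
  fun mm => Qw F a s (mm 0) (mm 1)

lemma coeff_qw (F a : MvPowerSeries (Fin 2) K) (s u x : ℕ) :
    MvPowerSeries.coeff (mon2 u x) (qw F a s) = Qw F a s u x := by
  show qw F a s (mon2 u x) = _
  rw [qw]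
  simp

lemma weierstrass_spec (F a : MvPowerSeries (Fin 2) K) (s : ℕ)
    (h0 : ∀ x, x < s → MvPowerSeries.coeff (mon2 0 x) F = 0)
    (hs : MvPowerSeries.coeff (mon2 0 s) F ≠ 0) (i j : ℕ) :
    MvPowerSeries.coeff (mon2 i (j+s)) (qw F a s * F) =
      MvPowerSeries.coeff (mon2 i (j+s)) a := by
  rw [coeff_mul_mon2, ← Finset.sum_product']
  rw [← Finset.sum_filter_add_sum_filter_not ((range (i+1)) ×ˢ (range (j+s+1)))
    (fun p => p.1 < i ∨ (p.1 = i ∧ p.2 < j))]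
  have h2 : ∑ p ∈ (((range (i+1)) ×ˢ (range (j+s+1))).filter
      (fun p => ¬(p.1 < i ∨ (p.1 = i ∧ p.2 < j)))),
      MvPowerSeries.coeff (mon2 p.1 p.2) (qw F a s) *
        MvPowerSeries.coeff (mon2 (i-p.1) (j+s-p.2)) F =
      Qw F a s i j * MvPowerSeries.coeff (mon2 0 s) F := by
    rw [Finset.sum_eq_single_of_mem (i, j)]
    · rw [coeff_qw, Nat.sub_self, Nat.add_sub_cancel_left]
    · simp only [Finset.mem_filter, Finset.mem_product, Finset.mem_range]
      omega
    · rintro ⟨q1, q2⟩ hq hne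
      simp only [Finset.mem_filter, Finset.mem_product, Finset.mem_range] at hq
      have hq1 : q1 = i := by omega
      have hq2 : j < q2 := by
        rcases Nat.lt_or_ge j q2 with h | h
        · exact h
        · exfalso; apply hne; rw [hq1]
          rcases hq with ⟨_, hP⟩
          congr 1
          omega
      have : MvPowerSeries.coeff (mon2 (i-q1) (j+s-q2)) F = 0 := by
        rw [hq1, Nat.sub_self]
        exact h0 _ (by omega)
      rw [this, mul_zero]
  rw [h2]
  have helper : ∀ (S : Finset (ℕ × ℕ)) (f g : ℕ × ℕ → K), (∀ p ∈ S, f p = g p) →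
      ∑ p ∈ S.attach, f ↑p = ∑ p ∈ S, g p := by
    intro S f g h
    rw [Finset.sum_attach]
    exact Finset.sum_congr rfl h
  have h1 : ∑ p ∈ (((range (i+1)) ×ˢ (range (j+s+1))).filter
          (fun p => p.1 < i ∨ (p.1 = i ∧ p.2 < j))).attach,
        Qw F a s p.1.1 p.1.2 *
          MvPowerSeries.coeff (mon2 (i - p.1.1) (j + s - p.1.2)) F =
      ∑ p ∈ (((range (i+1)) ×ˢ (range (j+s+1))).filter
          (fun p => p.1 < i ∨ (p.1 = i ∧ p.2 < j))),
        MvPowerSeries.coeff (mon2 p.1 p.2) (qw F a s) *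
          MvPowerSeries.coeff (mon2 (i-p.1) (j+s-p.2)) F := by
    refine helper _ (fun p => Qw F a s p.1 p.2 *
        MvPowerSeries.coeff (mon2 (i-p.1) (j+s-p.2)) F)
      (fun p => MvPowerSeries.coeff (mon2 p.1 p.2) (qw F a s) *
        MvPowerSeries.coeff (mon2 (i-p.1) (j+s-p.2)) F) ?_
    intro p hp
    beta_reduce
    rw [coeff_qw]
  rw [← h1]
  rw [Qw]
  field_simp
  ring

end Main
/-- Let `H ∈ K[[X,Y]]` be regular in `Y` of order `λ` (i.e. `ord H(0,Y) = λ`), let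
`a ∈ K[[X,Y]]` and `m ≥ 1`.  Suppose there are a unit `u` and `G ∈ K[[Y₁]]` of order `λ`
with `H(X₁,X₁Y₁) = X₁^λ · u · (X₁ + G(Y₁))`, and suppose `(X₁ + G(Y₁))^m` divides
`a(X₁,X₁Y₁)/X₁^c` for some `c` with `X₁^c ∣ a(X₁,X₁Y₁)`.  Then `H^m` divides `a` in
`K[[X,Y]]`. -/
theorem equimultiple_descends {K : Type*} [Field K] (lam : ℕ)
    (H a : MvPowerSeries (Fin 2) K)
    (hreg : MvPowerSeries.coeff (mon2 0 lam) H ≠ 0)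
    (hreg' : ∀ j, j < lam → MvPowerSeries.coeff (mon2 0 j) H = 0)
    (m : ℕ) (hm : 1 ≤ m)
    (u G : MvPowerSeries (Fin 2) K) (hu : IsUnit u)
    (hGY : ∀ mm : Fin 2 →₀ ℕ, MvPowerSeries.coeff mm G ≠ 0 → mm 0 = 0 ∧ lam ≤ mm 1)
    (hGlam : MvPowerSeries.coeff (mon2 0 lam) G ≠ 0)
    (hH : substXY H = (MvPowerSeries.X 0 : MvPowerSeries (Fin 2) K) ^ lam * u *
      (MvPowerSeries.X 0 + G))
    (c : ℕ) (b : MvPowerSeries (Fin 2) K)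
    (hb : substXY a = (MvPowerSeries.X 0 : MvPowerSeries (Fin 2) K) ^ c * b)
    (hdiv : ((MvPowerSeries.X 0 : MvPowerSeries (Fin 2) K) + G) ^ m ∣ b) :
    H ^ m ∣ a := by
  classical
  obtain ⟨d, hd⟩ := hdiv
  set X0 : MvPowerSeries (Fin 2) K := MvPowerSeries.X 0 with hX0def
  have hX0ne : X0 ≠ 0 := by
    intro h
    have h1 := congrArg (MvPowerSeries.coeff (Finsupp.single 0 1)) h
    rw [hX0def, MvPowerSeries.coeff_index_single_self_X, map_zero] at h1
    exact one_ne_zero h1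
  set s := m * lam with hs_def
  set F : MvPowerSeries (Fin 2) K := H ^ m with hF
  -- regularity of F along X = 0
  have hXlam : (PowerSeries.X : PowerSeries K) ^ lam ∣ piY H := by
    rw [PowerSeries.X_pow_dvd_iff]
    intro n hn
    rw [coeff_piY]
    exact hreg' n hn
  obtain ⟨v, hv⟩ := hXlam
  have hv0 : PowerSeries.constantCoeff v ≠ 0 := by
    have h2 : PowerSeries.coeff lam (piY H) = PowerSeries.constantCoeff v := by
      rw [hv]
      have h3 := PowerSeries.coeff_X_pow_mul v lam 0
      rw [zero_add] at h3
      rw [h3, PowerSeries.coeff_zero_eq_constantCoeff]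
    intro h0
    apply hreg
    rw [← coeff_piY, h2, h0]
  have hpiF : piY F = PowerSeries.X ^ s * v ^ m := by
    rw [hF, map_pow, hv, mul_pow, ← pow_mul, hs_def, mul_comm lam m]
  have hF0 : ∀ x, x < s → MvPowerSeries.coeff (mon2 0 x) F = 0 := by
    intro x hx
    rw [← coeff_piY, hpiF, PowerSeries.coeff_X_pow_mul', if_neg (by omega)]
  have hFs : MvPowerSeries.coeff (mon2 0 s) F ≠ 0 := by
    rw [← coeff_piY, hpiF]
    have h3 := PowerSeries.coeff_X_pow_mul (v ^ m) s 0
    rw [zero_add] at h3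
    rw [h3, PowerSeries.coeff_zero_eq_constantCoeff, map_pow]
    exact pow_ne_zero _ hv0
  set q := qw F a s with hq
  set r := a - q * F with hr
  have hrcoeff : ∀ i j, s ≤ j → MvPowerSeries.coeff (mon2 i j) r = 0 := by
    intro i j hj
    rw [hr, map_sub]
    have hj' : j = (j - s) + s := by omega
    rw [hj', weierstrass_spec F a s hF0 hFs i (j - s), sub_self]
  suffices hr0 : r = 0 by
    refine ⟨q, ?_⟩
    have h4 : a = q * F := by
      have := sub_eq_zero.mp (hr ▸ hr0)
      exact this.symm ▸ rfl
    rw [h4, hF]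
    ring
  by_contra hrne
  -- the transformed remainder
  have hsub_r : substXY r = (X0 + G) ^ m *
      (X0 ^ c * d - substXY q * (X0 ^ lam * u) ^ m) := by
    have h1 : substXY r = substXY a - substXY q * (substXY H) ^ m := by
      rw [hr]
      show substHom (a - q * F) = substHom a - substHom q * (substHom H) ^ m
      rw [map_sub, map_mul, hF, map_pow]
    rw [h1, hb, hd, hH, mul_pow (X0 ^ lam * u) (X0 + G) m]
    ring
  -- minimal total degree of a nonzero coefficient of r
  have hex : ∃ n : ℕ, ∃ i j : ℕ, i + j = n ∧ MvPowerSeries.coeff (mon2 i j) r ≠ 0 := by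
    have h5 : ∃ mm, MvPowerSeries.coeff mm r ≠ 0 := by
      by_contra hc
      push_neg at hc
      exact hrne (MvPowerSeries.ext fun mm => by rw [hc]; rw [map_zero])
    obtain ⟨mm, hmm⟩ := h5
    exact ⟨mm 0 + mm 1, mm 0, mm 1, rfl, by rw [mon2_eta]; exact hmm⟩
  set p := Nat.find hex with hp
  obtain ⟨i0, j0, hij0, hr0⟩ := Nat.find_spec hex
  have hj0s : j0 < s := by
    by_contra hge
    exact hr0 (hrcoeff i0 j0 (by omega))
  have hXp : X0 ^ p ∣ substXY r := by
    rw [hX0def, MvPowerSeries.X_pow_dvd_iff]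
    intro mm hmm
    rw [← mon2_eta mm, coeff_substXY]
    split
    · next h =>
      by_contra hne
      exact Nat.find_min hex (show mm 0 - mm 1 + mm 1 < p by omega)
        ⟨mm 0 - mm 1, mm 1, rfl, hne⟩
    · rfl
  obtain ⟨w, hw⟩ := hXp
  have hwj0 : MvPowerSeries.coeff (mon2 0 j0) w ≠ 0 := by
    have e1 : MvPowerSeries.coeff (mon2 p j0) (substXY r) =
        MvPowerSeries.coeff (mon2 0 j0) w := by
      rw [hw, hX0def, MvPowerSeries.X_pow_eq]
      have e2 : mon2 p j0 = Finsupp.single 0 p + mon2 0 j0 := by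
        rw [← mon2_eq_single0, mon2_add]
        norm_num
      rw [e2, MvPowerSeries.coeff_add_monomial_mul, one_mul]
    rw [← e1, coeff_substXY, if_pos (by omega : j0 ≤ p),
      show p - j0 = i0 by omega]
    exact hr0
  -- facts about piY
  have hpiX : piY (X0 : MvPowerSeries (Fin 2) K) = 0 := by
    apply PowerSeries.ext
    intro n
    rw [coeff_piY, hX0def, MvPowerSeries.coeff_X, if_neg, map_zero]
    intro hcon
    have := congrArg (fun f => f 0) hcon
    simp at this
  have hpiG : piY G ≠ 0 := by
    intro h0
    apply hGlam
    rw [← coeff_piY, h0, map_zero]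
  -- cancel the powers of X
  have cancel : ∀ (pp : ℕ) (T : MvPowerSeries (Fin 2) K),
      (X0 + G) ^ m * T = X0 ^ pp * w → ∃ T₀, (X0 + G) ^ m * T₀ = w := by
    intro pp
    induction pp with
    | zero =>
      intro T h
      exact ⟨T, by rw [h, pow_zero, one_mul]⟩
    | succ pp ih =>
      intro T h
      have hpiT : piY T = 0 := by
        have h6 := congrArg piY h
        rw [map_mul, map_pow, map_add, hpiX, zero_add, map_mul, map_pow, hpiX,
          zero_pow (Nat.succ_ne_zero pp), zero_mul] at h6
        exact (mul_eq_zero.mp h6).resolve_left (pow_ne_zero _ hpiG)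
      have hXT : X0 ∣ T := by
        rw [hX0def, MvPowerSeries.X_dvd_iff]
        intro mm hmm0
        have h7 : MvPowerSeries.coeff (mon2 0 (mm 1)) T = 0 := by
          rw [← coeff_piY, hpiT, map_zero]
        rw [← mon2_eta mm, hmm0]
        exact h7
      obtain ⟨T', hT'⟩ := hXT
      rw [hT'] at h
      have hcan : (X0 + G) ^ m * T' = X0 ^ pp * w := by
        apply mul_left_cancel₀ hX0ne
        calc X0 * ((X0 + G) ^ m * T') = (X0 + G) ^ m * (X0 * T') := by ring
          _ = X0 ^ (pp+1) * w := h
          _ = X0 * (X0 ^ pp * w) := by ring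
      exact ih T' hcan
  obtain ⟨T₀, hT₀⟩ := cancel p _ (by rw [← hsub_r, hw])
  -- final contradiction via orders in K[[Y]]
  have hdvdG : (PowerSeries.X : PowerSeries K) ^ lam ∣ piY G := by
    rw [PowerSeries.X_pow_dvd_iff]
    intro n hn
    rw [coeff_piY]
    by_contra hne
    have := (hGY (mon2 0 n) hne).2
    rw [mon2_apply1] at this
    omega
  have hdvdw : (PowerSeries.X : PowerSeries K) ^ s ∣ piY w := by
    have h8 := congrArg piY hT₀
    rw [map_mul, map_pow, map_add, hpiX, zero_add] at h8
    rw [← h8]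
    have h9 : ((PowerSeries.X : PowerSeries K) ^ lam) ^ m ∣ (piY G) ^ m :=
      pow_dvd_pow_of_dvd hdvdG m
    rw [← pow_mul, mul_comm lam m, ← hs_def] at h9
    exact h9.mul_right _
  rw [PowerSeries.X_pow_dvd_iff] at hdvdw
  apply hwj0
  rw [← coeff_piY]
  exact hdvdw j0 hj0s
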